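/- Let γ ∈ (0,1), x ≥ 2 an integer, and θ'(x,p) := Σ_{y=0}^x p(y) (1/2)^y (1−γ)^{max(y−1,0)} for a probability mass function p on {0,…,x}. If p₁, p₂ are symmetric about x/2 and p₁ centrally dominates p₂, then θ'(x,p₁) ≤ θ'(x,p₂). -/

import Mathlib

/-!
By symmetry of `p₁` and `p₂`, it suffices to compare the expectations of `W y = w y + w (x - y)`,
where `w` is the weight inside `θ'`. The decrements of `w` decrease, so `W` grows with the distance
from `y` to the centre `x / 2`. Central dominance puts every point where `p₁` exceeds `p₂` closer to
the centre than every point where `p₂` exceeds `p₁`; as both have total mass `1`, passing from `p₂`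
to `p₁` moves mass towards smaller values of `W`.
-/

open Finset

theorem sum_mul_le_sum_mul_of_single_crossing {ι : Type*} (s : Finset ι) (p q g : ι → ℝ)
    (hsum : ∑ i ∈ s, p i = ∑ i ∈ s, q i)
    (hcross : ∀ i ∈ s, ∀ j ∈ s, q i < p i → p j < q j → g i ≤ g j) :
    ∑ i ∈ s, p i * g i ≤ ∑ i ∈ s, q i * g i := by
  set A := s.filter fun i => q i < p i
  rcases A.eq_empty_or_nonempty with hA | hA
  · have hle : ∀ i ∈ s, p i ≤ q i := fun i hi =>
      not_lt.mp fun h => (Finset.eq_empty_iff_forall_notMem.mp hA) i (mem_filter.mpr ⟨hi, h⟩)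
    have heq := (sum_eq_sum_iff_of_le hle).mp hsum
    exact (sum_congr rfl fun i hi => by rw [heq i hi]).le
  set c := A.sup' hA g
  have hterm : ∀ i ∈ s, (p i - q i) * (g i - c) ≤ 0 := by
    intro i hi
    rcases lt_trichotomy (q i) (p i) with hqp | hpq | hpq
    · have : g i ≤ c := le_sup' g (mem_filter.mpr ⟨hi, hqp⟩)
      nlinarith
    · simp [hpq]
    · have : c ≤ g i := sup'_le hA g fun j hj => hcross j (mem_filter.mp hj).1 i hi
        (mem_filter.mp hj).2 hpq
      nlinarith
  have hsplit : ∑ i ∈ s, (p i - q i) * (g i - c)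
      = ∑ i ∈ s, p i * g i - ∑ i ∈ s, q i * g i - c * (∑ i ∈ s, p i - ∑ i ∈ s, q i) := by
    simp only [mul_sub, sub_mul, sum_sub_distrib, ← sum_mul]
    ring
  have := sum_nonpos hterm
  rw [hsplit, hsum, sub_self, mul_zero, sub_zero] at this
  linarith

theorem sum_range_mul_reflect_of_symm {p : ℕ → ℝ} {x : ℕ} (hp : ∀ y ≤ x, p (x - y) = p y)
    (f : ℕ → ℝ) :
    ∑ y ∈ range (x + 1), p y * f (x - y) = ∑ y ∈ range (x + 1), p y * f y := by
  rw [← sum_range_reflect]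
  refine sum_congr rfl fun y hy => ?_
  have hyx : y ≤ x := Nat.lt_succ_iff.mp (mem_range.mp hy)
  rw [Nat.add_sub_cancel, hp y hyx, Nat.sub_sub_self hyx]

theorem two_mul_sum_range_mul_of_symm {p : ℕ → ℝ} {x : ℕ} (hp : ∀ y ≤ x, p (x - y) = p y)
    (f : ℕ → ℝ) :
    2 * ∑ y ∈ range (x + 1), p y * f y = ∑ y ∈ range (x + 1), p y * (f y + f (x - y)) := by
  simp only [mul_add, sum_add_distrib, sum_range_mul_reflect_of_symm hp]
  ring

theorem add_comp_sub_eq_min {w : ℕ → ℝ} {x y : ℕ} (hy : y ≤ x) :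
    w y + w (x - y) = w (min y (x - y)) + w (x - min y (x - y)) := by
  rcases le_total y (x - y) with h | h
  · rw [min_eq_left h]
  · rw [min_eq_right h, Nat.sub_sub_self hy, add_comm]

theorem abs_sub_half_eq {x y : ℕ} (hy : y ≤ x) :
    |(y : ℝ) - x / 2| = x / 2 - (min y (x - y) : ℕ) := by
  rcases le_total y (x - y) with h | h
  · have : 2 * (y : ℝ) ≤ x := by exact_mod_cast (by omega : 2 * y ≤ x)
    rw [min_eq_left h, abs_of_nonpos (by linarith)]
    ring
  · have : (x : ℝ) ≤ 2 * y := by exact_mod_cast (by omega : x ≤ 2 * y)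
    rw [min_eq_right h, Nat.cast_sub hy, abs_of_nonneg (by linarith)]
    ring

section ConvexWeight

variable {w : ℕ → ℝ} (hw : Antitone fun n => w n - w (n + 1))
include hw

theorem antitoneOn_add_comp_sub (x : ℕ) :
    AntitoneOn (fun k => w k + w (x - k)) {k | 2 * k ≤ x} := by
  intro k _ l hl hkl
  induction l, hkl using Nat.le_induction with
  | base => exact le_rfl
  | succ n _ ih =>
    have hn : 2 * (n + 1) ≤ x := hl
    have hsucc : x - n = x - (n + 1) + 1 := by omega
    have hdec : w (x - (n + 1)) - w (x - n) ≤ w n - w (n + 1) := by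
      rw [hsucc]
      exact hw (show n ≤ x - (n + 1) by omega)
    exact (by linarith : w (n + 1) + w (x - (n + 1)) ≤ w n + w (x - n)).trans
      (ih (show 2 * _ ≤ x by omega))

theorem add_comp_sub_le_of_abs_sub_half_le {x y y' : ℕ} (hy : y ≤ x) (hy' : y' ≤ x)
    (hdist : |(y : ℝ) - x / 2| ≤ |(y' : ℝ) - x / 2|) :
    w y + w (x - y) ≤ w y' + w (x - y') := by
  rw [abs_sub_half_eq hy, abs_sub_half_eq hy'] at hdist
  rw [add_comp_sub_eq_min hy, add_comp_sub_eq_min hy']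
  have hmin : ((min y' (x - y') : ℕ) : ℝ) ≤ (min y (x - y) : ℕ) := by linarith
  exact antitoneOn_add_comp_sub hw x (show 2 * _ ≤ x by omega) (show 2 * _ ≤ x by omega)
    (Nat.cast_le.mp hmin)

end ConvexWeight

noncomputable def thetaWeight (γ : ℝ) (y : ℕ) : ℝ := (1 / 2) ^ y * (1 - γ) ^ (y - 1)

theorem thetaWeight_succ (γ : ℝ) (n : ℕ) :
    thetaWeight γ (n + 1) = (1 / 2) ^ (n + 1) * (1 - γ) ^ n := by
  rw [thetaWeight, Nat.add_sub_cancel]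

theorem antitone_thetaWeight_sub_succ {γ : ℝ} (hγ0 : 0 < γ) (hγ1 : γ < 1) :
    Antitone fun n => thetaWeight γ n - thetaWeight γ (n + 1) := by
  refine antitone_nat_of_succ_le fun n => ?_
  cases n with
  | zero => norm_num [thetaWeight]; linarith
  | succ n =>
    have hrec : thetaWeight γ (n + 2) - thetaWeight γ (n + 3)
        = (1 - γ) / 2 * (thetaWeight γ (n + 1) - thetaWeight γ (n + 2)) := by
      simp only [thetaWeight_succ, pow_succ]
      ring
    have hnonneg : 0 ≤ thetaWeight γ (n + 1) - thetaWeight γ (n + 2) := by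
      have : thetaWeight γ (n + 1) - thetaWeight γ (n + 2)
          = (1 / 2) ^ (n + 1) * (1 - γ) ^ n * ((1 + γ) / 2) := by
        simp only [thetaWeight_succ, pow_succ]
        ring
      rw [this]
      have : 0 < 1 - γ := by linarith
      positivity
    rw [hrec]
    exact mul_le_of_le_one_left hnonneg (by linarith)

theorem stmt_4 (γ : ℝ) (hγ0 : 0 < γ) (hγ1 : γ < 1) (x : ℕ)
    (p₁ p₂ : ℕ → ℝ)
    (h₁sum : ∑ y ∈ Finset.range (x + 1), p₁ y = 1)
    (h₂sum : ∑ y ∈ Finset.range (x + 1), p₂ y = 1)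
    (h₁sym : ∀ y ≤ x, p₁ (x - y) = p₁ y)
    (h₂sym : ∀ y ≤ x, p₂ (x - y) = p₂ y)
    (hdom : ∃ z : ℝ, 0 ≤ z ∧ z ≤ (x : ℝ) / 2 ∧
      ∀ y ≤ x, (|(y : ℝ) - (x : ℝ) / 2| ≤ z → p₂ y ≤ p₁ y) ∧
               (z < |(y : ℝ) - (x : ℝ) / 2| → p₁ y ≤ p₂ y)) :
    ∑ y ∈ Finset.range (x + 1), p₁ y * (1 / 2 : ℝ) ^ y * (1 - γ) ^ (y - 1) ≤
    ∑ y ∈ Finset.range (x + 1), p₂ y * (1 / 2 : ℝ) ^ y * (1 - γ) ^ (y - 1) := by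
  obtain ⟨z, -, -, hdom⟩ := hdom
  have hw := antitone_thetaWeight_sub_succ hγ0 hγ1
  have hpaired := sum_mul_le_sum_mul_of_single_crossing (range (x + 1)) p₁ p₂
    (fun y => thetaWeight γ y + thetaWeight γ (x - y)) (h₁sum.trans h₂sum.symm)
    fun i hi j hj hi₁ hj₂ => by
      have hix : i ≤ x := Nat.lt_succ_iff.mp (mem_range.mp hi)
      have hjx : j ≤ x := Nat.lt_succ_iff.mp (mem_range.mp hj)
      have hi_in : |(i : ℝ) - x / 2| ≤ z := not_lt.mp fun h => hi₁.not_ge ((hdom i hix).2 h)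
      have hj_out : z < |(j : ℝ) - x / 2| := not_le.mp fun h => hj₂.not_ge ((hdom j hjx).1 h)
      exact add_comp_sub_le_of_abs_sub_half_le hw hix hjx (hi_in.trans hj_out.le)
  rw [← two_mul_sum_range_mul_of_symm h₁sym, ← two_mul_sum_range_mul_of_symm h₂sym] at hpaired
  simp only [mul_assoc]
  exact le_of_mul_le_mul_left hpaired two_pos
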